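/- Let a, b, c be pairwise coprime positive integers. Then σ_t(a,b;c) ≥ -c/12 - 1/(12c) for every integer t. -/

import Mathlib

open Complex Finset ComplexOrder

/-!
At a nontrivial `n`-th root of unity `μ` one has `(μ - 1) * ∑_{j<n} j μ^j = n`, so Parseval's
identity for the discrete Fourier transform of `j ↦ j` yields
`∑_{k=1}^{n-1} |ζ^k - 1|⁻² = (n * ∑ j² - (∑ j)²) / n² = (n² - 1) / 12` for a primitive root `ζ`.
By AM-GM, the `k`-th term of `σ_t(a,b;c)` has modulus at most
`(|ζ^{ak} - 1|⁻² + |ζ^{bk} - 1|⁻²) / 2`, and as `a` and `b` are units mod `c` both resulting sums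
equal `(c² - 1) / 12`. Hence `c * Re σ_t ≥ -(c² - 1) / 12`, while `σ_t` is real because complex
conjugation maps its `k`-th term to its `(c - k)`-th term.
-/

theorem sub_one_mul_sum_range_mul_pow {R : Type*} [CommRing R] (x : R) (n : ℕ) :
    (x - 1) * ∑ j ∈ range n, (j : R) * x ^ j = (n - 1) * x ^ n - ∑ j ∈ range n, x ^ j + 1 := by
  induction n with
  | zero => simp
  | succ n ih =>
    rw [sum_range_succ, sum_range_succ (fun j => x ^ j), mul_add, ih]
    push_cast
    ring

theorem sub_one_mul_sum_range_mul_pow_of_pow_eq_one {K : Type*} [Field K] {μ : K} {n : ℕ}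
    (hμn : μ ^ n = 1) (hμ : μ ≠ 1) : (μ - 1) * ∑ j ∈ range n, (j : K) * μ ^ j = n := by
  rw [sub_one_mul_sum_range_mul_pow, hμn, geom_sum_eq hμ, hμn, sub_self, zero_div]
  ring

theorem twelve_mul_mul_sum_range_sq_sub_sq_sum_range {R : Type*} [CommRing R] (n : ℕ) :
    12 * (n * ∑ j ∈ range n, (j : R) ^ 2 - (∑ j ∈ range n, (j : R)) ^ 2) =
      (n : R) ^ 2 * (n ^ 2 - 1) := by
  have hid : ∀ m : ℕ, 2 * ∑ j ∈ range m, (j : R) = m * (m - 1) := by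
    intro m
    induction m with
    | zero => simp
    | succ m ih => rw [sum_range_succ, mul_add, ih]; push_cast; ring
  have hsq : ∀ m : ℕ, 6 * ∑ j ∈ range m, (j : R) ^ 2 = m * (m - 1) * (2 * m - 1) := by
    intro m
    induction m with
    | zero => simp
    | succ m ih => rw [sum_range_succ, mul_add, ih]; push_cast; ring
  linear_combination 2 * (n : R) * hsq n - 3 * (2 * ∑ j ∈ range n, (j : R) + n * (n - 1)) * hid n

theorem sum_Ico_comp_inv_pow_of_pow_eq_one {G M : Type*} [DivisionMonoid G] [AddCommMonoid M]
    {ζ : G} {n : ℕ} (hζ : ζ ^ n = 1) (F : G → M) :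
    ∑ k ∈ Ico 1 n, F (ζ ^ k)⁻¹ = ∑ k ∈ Ico 1 n, F (ζ ^ k) := by
  refine sum_nbij' (n - ·) (n - ·) ?_ ?_ ?_ ?_ ?_ <;> simp only [mem_Ico]
  · omega
  · omega
  · omega
  · omega
  · intro k hk
    rw [← eq_inv_of_mul_eq_one_left (by rw [← pow_add, Nat.sub_add_cancel hk.2.le, hζ])]

namespace IsPrimitiveRoot

section Field

variable {K : Type*} [Field K] {ζ : K} {n : ℕ}

theorem sum_range_pow_div_pow (hζ : IsPrimitiveRoot ζ n) {i j : ℕ} (hi : i < n) (hj : j < n) :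
    ∑ k ∈ range n, (ζ ^ i / ζ ^ j) ^ k = if i = j then (n : K) else 0 := by
  have hζj : ζ ^ j ≠ 0 := pow_ne_zero j (hζ.ne_zero (by omega))
  split_ifs with hij
  · simp [hij, hζj]
  · have hne : ζ ^ i / ζ ^ j ≠ 1 := fun h =>
      hij (hζ.pow_inj hi hj ((div_eq_one_iff_eq hζj).mp h))
    rw [geom_sum_eq hne, div_pow, ← pow_mul, ← pow_mul, mul_comm i, mul_comm j, pow_mul, pow_mul,
      hζ.pow_eq_one, one_pow, one_pow, div_one, sub_self, zero_div]

/-- Parseval's identity for the discrete Fourier transform of length `n`. -/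
theorem sum_range_mul_sum_inv (hζ : IsPrimitiveRoot ζ n) (f g : ℕ → K) :
    ∑ k ∈ range n, (∑ i ∈ range n, f i * (ζ ^ k) ^ i) * (∑ j ∈ range n, g j * (ζ ^ k)⁻¹ ^ j) =
      n * ∑ i ∈ range n, f i * g i := by
  have hexpand : ∀ k i j, f i * (ζ ^ k) ^ i * (g j * (ζ ^ k)⁻¹ ^ j) =
      f i * g j * (ζ ^ i / ζ ^ j) ^ k := by
    intro k i j
    rw [div_pow, ← pow_mul, ← pow_mul, inv_pow, ← pow_mul, mul_comm k i, mul_comm k j]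
    ring
  simp_rw [sum_mul_sum, hexpand]
  rw [sum_comm, mul_sum]
  refine sum_congr rfl fun i hi => ?_
  rw [sum_comm]
  simp_rw [← mul_sum]
  rw [sum_congr rfl fun j hj => by
    rw [hζ.sum_range_pow_div_pow (mem_range.mp hi) (mem_range.mp hj)]]
  simp [hi, mul_comm]

theorem sum_Ico_inv_sub_one_mul_inv_sub_one [CharZero K] (hζ : IsPrimitiveRoot ζ n)
    (hn : 0 < n) : ∑ k ∈ Ico 1 n, ((ζ ^ k - 1) * ((ζ ^ k)⁻¹ - 1))⁻¹ = ((n : K) ^ 2 - 1) / 12 := by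
  set S : K → K := fun μ => ∑ j ∈ range n, (j : K) * μ ^ j
  have hn0 : (n : K) ≠ 0 := Nat.cast_ne_zero.mpr hn.ne'
  have hterm : ∀ k ∈ Ico 1 n, ((ζ ^ k - 1) * ((ζ ^ k)⁻¹ - 1))⁻¹ =
      S (ζ ^ k) * S (ζ ^ k)⁻¹ / n ^ 2 := by
    intro k hk
    obtain ⟨hk1, hkn⟩ := mem_Ico.mp hk
    have hpow : (ζ ^ k) ^ n = 1 := by rw [pow_right_comm, hζ.pow_eq_one, one_pow]
    have hne : ζ ^ k ≠ 1 := hζ.pow_ne_one_of_pos_of_lt (by omega) hkn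
    have h₁ := sub_one_mul_sum_range_mul_pow_of_pow_eq_one hpow hne
    have h₂ := sub_one_mul_sum_range_mul_pow_of_pow_eq_one (by rw [inv_pow, hpow, inv_one])
      (inv_ne_one.mpr hne)
    have hX : (ζ ^ k - 1) * ((ζ ^ k)⁻¹ - 1) ≠ 0 :=
      mul_ne_zero (sub_ne_zero.mpr hne) (sub_ne_zero.mpr (inv_ne_one.mpr hne))
    rw [eq_div_iff (pow_ne_zero 2 hn0), sq]
    nth_rw 1 [← h₁]
    rw [← h₂, mul_mul_mul_comm, inv_mul_cancel_left₀ hX]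
  have hparseval := hζ.sum_range_mul_sum_inv (fun j => (j : K)) (fun j => (j : K))
  rw [sum_range_eq_add_Ico _ hn] at hparseval
  simp only [pow_zero, inv_one, one_pow, mul_one, ← sq] at hparseval
  rw [sum_congr rfl hterm, ← sum_div, div_eq_div_iff (pow_ne_zero 2 hn0) (by norm_num),
    eq_sub_of_add_eq' hparseval]
  linear_combination twelve_mul_mul_sum_range_sq_sub_sq_sum_range (R := K) n

end Field

section Complex

variable {ζ : ℂ} {n : ℕ}

theorem sum_Ico_inv_norm_sub_one_sq (hζ : IsPrimitiveRoot ζ n) (hn : 0 < n) :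
    ∑ k ∈ Ico 1 n, (‖ζ ^ k - 1‖ ^ 2)⁻¹ = ((n : ℝ) ^ 2 - 1) / 12 := by
  apply ofReal_injective
  push_cast
  rw [← hζ.sum_Ico_inv_sub_one_mul_inv_sub_one hn]
  refine sum_congr rfl fun k _ => ?_
  have hnorm : ‖ζ ^ k‖ = 1 := by rw [norm_pow, hζ.norm'_eq_one hn.ne', one_pow]
  rw [← mul_conj', map_sub, map_one, ← inv_eq_conj hnorm]

theorem im_sum_Ico_zpow_div (hζ : IsPrimitiveRoot ζ n) (hn : 0 < n) (t : ℤ) (a b : ℕ) :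
    (∑ k ∈ Ico 1 n, (ζ ^ k) ^ t / (((ζ ^ k) ^ a - 1) * ((ζ ^ k) ^ b - 1))).im = 0 := by
  rw [← conj_eq_iff_im, map_sum]
  have hconj : ∀ k, (starRingEnd ℂ) (ζ ^ k) = (ζ ^ k)⁻¹ := fun k => by
    rw [inv_eq_conj (by rw [norm_pow, hζ.norm'_eq_one hn.ne', one_pow])]
  simp only [map_div₀, map_mul, map_sub, map_one, map_pow, map_zpow₀, hconj]
  exact sum_Ico_comp_inv_pow_of_pow_eq_one hζ.pow_eq_one
    fun μ => μ ^ t / ((μ ^ a - 1) * (μ ^ b - 1))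

theorem _root_.Complex.neg_re_div_mul_le {x : ℂ} (hx : ‖x‖ ≤ 1) (α β : ℂ) :
    -(x / (α * β)).re ≤ ((‖α‖ ^ 2)⁻¹ + (‖β‖ ^ 2)⁻¹) / 2 := by
  calc -(x / (α * β)).re ≤ ‖x / (α * β)‖ := (neg_le_abs _).trans (abs_re_le_norm _)
    _ = ‖x‖ * (‖α‖⁻¹ * ‖β‖⁻¹) := by rw [norm_div, norm_mul, div_eq_mul_inv, mul_inv]
    _ ≤ ‖α‖⁻¹ * ‖β‖⁻¹ := mul_le_of_le_one_left (by positivity) hx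
    _ ≤ ((‖α‖ ^ 2)⁻¹ + (‖β‖ ^ 2)⁻¹) / 2 := by
      rw [← inv_pow, ← inv_pow]
      linarith [two_mul_le_add_sq ‖α‖⁻¹ ‖β‖⁻¹]

theorem one_sub_sq_div_twelve_le_re_sum_Ico_zpow_div (hζ : IsPrimitiveRoot ζ n) (hn : 0 < n)
    (t : ℤ) {a b : ℕ} (ha : a.Coprime n) (hb : b.Coprime n) :
    (1 - (n : ℝ) ^ 2) / 12 ≤
      (∑ k ∈ Ico 1 n, (ζ ^ k) ^ t / (((ζ ^ k) ^ a - 1) * ((ζ ^ k) ^ b - 1))).re := by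
  have hsum : ∀ d, d.Coprime n →
      ∑ k ∈ Ico 1 n, (‖(ζ ^ k) ^ d - 1‖ ^ 2)⁻¹ = ((n : ℝ) ^ 2 - 1) / 12 := fun d hd => by
    rw [← (hζ.pow_of_coprime d hd).sum_Ico_inv_norm_sub_one_sq hn]
    exact sum_congr rfl fun k _ => by rw [pow_right_comm]
  have hnorm : ∀ k : ℕ, ‖(ζ ^ k) ^ t‖ ≤ 1 := fun k => by
    rw [norm_zpow, norm_pow, hζ.norm'_eq_one hn.ne', one_pow, one_zpow]
  rw [re_sum]
  calc (1 - (n : ℝ) ^ 2) / 12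
      = ∑ k ∈ Ico 1 n, -(((‖(ζ ^ k) ^ a - 1‖ ^ 2)⁻¹ + (‖(ζ ^ k) ^ b - 1‖ ^ 2)⁻¹) / 2) := by
        rw [sum_neg_distrib, ← sum_div, sum_add_distrib, hsum a ha, hsum b hb]
        ring
    _ ≤ _ := sum_le_sum fun k _ => neg_le.mp (neg_re_div_mul_le (hnorm k) _ _)

end Complex

end IsPrimitiveRoot

theorem fourier_dedekind_lower_bound_general (a b c : ℕ) (hc : 0 < c)
    (hac : Nat.Coprime a c) (hbc : Nat.Coprime b c) (t : ℤ) :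
    (-(c : ℂ) / 12 - 1 / (12 * c)) ≤
      (1 / (c : ℂ)) * ∑ k ∈ Finset.Ico 1 c,
        (Complex.exp (2 * Real.pi * Complex.I * k / c)) ^ t /
          (((Complex.exp (2 * Real.pi * Complex.I * k / c)) ^ (a : ℤ) - 1) *
            ((Complex.exp (2 * Real.pi * Complex.I * k / c)) ^ (b : ℤ) - 1)) := by
  have hζ := isPrimitiveRoot_exp c hc.ne'
  have hexp : ∀ k : ℕ, exp (2 * Real.pi * I * k / c) = exp (2 * Real.pi * I / c) ^ k := by
    intro k
    rw [← exp_nat_mul]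
    ring_nf
  simp only [hexp, zpow_natCast]
  set W := ∑ k ∈ Ico 1 c, (exp (2 * Real.pi * I / c) ^ k) ^ t /
    (((exp (2 * Real.pi * I / c) ^ k) ^ a - 1) * ((exp (2 * Real.pi * I / c) ^ k) ^ b - 1))
  have hW : W = (W.re : ℂ) := ext rfl (hζ.im_sum_Ico_zpow_div hc t a b)
  have hre := hζ.one_sub_sq_div_twelve_le_re_sum_Ico_zpow_div hc t hac hbc
  have hreal : -(c : ℝ) / 12 - 1 / (12 * c) ≤ 1 / c * W.re := by
    have hcR : (0 : ℝ) < c := Nat.cast_pos.mpr hc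
    have hlhs : (-(c : ℝ) / 12 - 1 / (12 * c)) * c = -((c : ℝ) ^ 2 + 1) / 12 := by
      field_simp
      ring
    rw [one_div_mul_eq_div, le_div_iff₀ hcR, hlhs]
    linarith
  calc -(c : ℂ) / 12 - 1 / (12 * c) = ((-(c : ℝ) / 12 - 1 / (12 * c) : ℝ) : ℂ) := by
        push_cast; ring
    _ ≤ ((1 / c * W.re : ℝ) : ℂ) := real_le_real.mpr hreal
    _ = 1 / c * W := by push_cast; rw [← hW]

theorem fourier_dedekind_lower_bound (a b c : ℕ) (ha : 0 < a) (hb : 0 < b) (hc : 0 < c)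
    (hab : Nat.Coprime a b) (hac : Nat.Coprime a c) (hbc : Nat.Coprime b c) (t : ℤ) :
    (-(c : ℂ) / 12 - 1 / (12 * c)) ≤
      (1 / (c : ℂ)) * ∑ k ∈ Finset.Ico 1 c,
        (Complex.exp (2 * Real.pi * Complex.I * k / c)) ^ t /
          (((Complex.exp (2 * Real.pi * Complex.I * k / c)) ^ (a : ℤ) - 1) *
            ((Complex.exp (2 * Real.pi * Complex.I * k / c)) ^ (b : ℤ) - 1)) :=
  fourier_dedekind_lower_bound_general a b c hc hac hbc t
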